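/- Let L and L̄ be two solutions of the McKean–Vlasov problem (MV) associated with the same X₀, Z, f and α. Then for every t ≥ 0, |L_t − L̄_t| ≤ max( E[ ν₀( I(sup_{s≤t}(α f(L_s) − Z_s), sup_{s≤t}(α f(L̄_s) − Z_s)) ) ], E[ ν₀( I(sup_{s≤t}(α f(L̄_s) − Z_s), sup_{s≤t}(α f(L_s) − Z_s)) ) ] ), where for real a, b we write I(a,b) := {y ∈ ℝ : a < y ≤ b} (the empty set when b ≤ a), and the expectation is over the randomness of the process Z. -/

import Mathlib

open MeasureTheory ProbabilityTheory Filter Set Function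
open Topology

set_option linter.unusedSectionVars false
set_option linter.unusedVariables false
set_option maxHeartbeats 1000000

noncomputable section

variable {Ω : Type*} [MeasureSpace Ω]

/-- The event that the particle `X_s = X₀ + Z_s − α f(L_s)` has reached `(-∞, 0]` by time `t`
(equivalently, `τ ≤ t` for the continuous/càdlàg dynamics). -/
def hitBy (X0 : Ω → ℝ) (Z : ℝ → Ω → ℝ) (f : ℝ → ℝ) (α : ℝ) (L : ℝ → ℝ) (t : ℝ) : Set Ω :=
  {ω | ∃ s ∈ Set.Icc (0 : ℝ) t, X0 ω + Z s ω - α * f (L s) ≤ 0}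

/-- A solution of the McKean--Vlasov problem (MV): a nondecreasing right-continuous
function `L : [0,∞) → [0,1]` with `L 0 = 0` such that `L t = ℙ(τ ≤ t)` for all `t ≥ 0`. -/
def IsMVSolution (X0 : Ω → ℝ) (Z : ℝ → Ω → ℝ) (f : ℝ → ℝ) (α : ℝ) (L : ℝ → ℝ) : Prop :=
  MonotoneOn L (Set.Ici 0) ∧ L 0 = 0 ∧ (∀ t, 0 ≤ t → L t ∈ Set.Icc (0 : ℝ) 1) ∧
  (∀ t, 0 ≤ t → ContinuousWithinAt L (Set.Ici t) t) ∧
  (∀ t, 0 ≤ t → L t = ((ℙ : Measure Ω) (hitBy X0 Z f α L t)).toReal)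

/-- The running supremum `sup_{0 ≤ s ≤ t} (α f(L_s) − Z_s(ω))`. -/
def runSup (Z : ℝ → Ω → ℝ) (f : ℝ → ℝ) (α : ℝ) (L : ℝ → ℝ) (t : ℝ) (ω : Ω) : ℝ :=
  sSup ((fun s => α * f (L s) - Z s ω) '' Set.Icc (0 : ℝ) t)

namespace MVAux

variable {X0 : Ω → ℝ} {Z : ℝ → Ω → ℝ} {f : ℝ → ℝ} {α : ℝ} {L : ℝ → ℝ}


lemma mem_hitBy_iff {t : ℝ} {ω : Ω} :
    ω ∈ hitBy X0 Z f α L t ↔ ∃ s ∈ Set.Icc (0:ℝ) t, X0 ω ≤ α * f (L s) - Z s ω := by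
  constructor <;> rintro ⟨s, hs, h⟩ <;> exact ⟨s, hs, by linarith⟩

lemma hitBy_mono {u v : ℝ} (h : u ≤ v) : hitBy X0 Z f α L u ⊆ hitBy X0 Z f α L v := by
  rintro ω ⟨s, hs, hle⟩
  exact ⟨s, ⟨hs.1, hs.2.trans h⟩, hle⟩

lemma bddAbove_g (hZcont : ∀ ω, Continuous fun t => Z t ω) (hf : ContinuousOn f (Set.Icc 0 1))
    (hmem : ∀ s, 0 ≤ s → L s ∈ Set.Icc (0:ℝ) 1) (t : ℝ) (ω : Ω) :
    BddAbove ((fun s => α * f (L s) - Z s ω) '' Set.Icc 0 t) := by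
  obtain ⟨C, hC⟩ := (isCompact_Icc (a := (0:ℝ)) (b := 1)).exists_bound_of_continuousOn hf
  obtain ⟨C₂, hC₂⟩ :=
    (isCompact_Icc (a := (0:ℝ)) (b := t)).exists_bound_of_continuousOn (hZcont ω).continuousOn
  refine ⟨|α| * C + C₂, ?_⟩
  rintro x ⟨s, hs, rfl⟩
  have h1 : |f (L s)| ≤ C := by simpa [Real.norm_eq_abs] using hC _ (hmem s hs.1)
  have h2 : |Z s ω| ≤ C₂ := by simpa [Real.norm_eq_abs] using hC₂ s hs
  have h3 : α * f (L s) ≤ |α| * C := by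
    calc α * f (L s) ≤ |α * f (L s)| := le_abs_self _
    _ = |α| * |f (L s)| := abs_mul _ _
    _ ≤ |α| * C := mul_le_mul_of_nonneg_left h1 (abs_nonneg α)
  have h4 := neg_abs_le (Z s ω)
  simp only
  linarith

/-- left-limit value of a monotone `L` at `s`. -/
def lsup (L : ℝ → ℝ) (s : ℝ) : ℝ := sSup (L '' Set.Ico 0 s)


section lsupSec

lemma lsup_nonempty {s : ℝ} (hs : 0 < s) : (L '' Set.Ico 0 s).Nonempty :=
  ⟨L 0, 0, ⟨le_refl 0, hs⟩, rfl⟩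

lemma lsup_bdd (hmem : ∀ s, 0 ≤ s → L s ∈ Set.Icc (0:ℝ) 1) {s : ℝ} :
    BddAbove (L '' Set.Ico 0 s) := by
  refine ⟨1, ?_⟩
  rintro x ⟨u, hu, rfl⟩
  exact (hmem u hu.1).2

lemma le_lsup (hmem : ∀ s, 0 ≤ s → L s ∈ Set.Icc (0:ℝ) 1) {s u : ℝ}
    (hu : u ∈ Set.Ico 0 s) : L u ≤ lsup L s :=
  le_csSup (lsup_bdd hmem) ⟨u, hu, rfl⟩

lemma lsup_le (hmono : MonotoneOn L (Set.Ici 0)) {s : ℝ} (hs : 0 < s) : lsup L s ≤ L s := by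
  refine csSup_le (lsup_nonempty hs) ?_
  rintro x ⟨u, hu, rfl⟩
  exact hmono hu.1 (hu.1.trans hu.2.le) hu.2.le

lemma lsup_mem (hmono : MonotoneOn L (Set.Ici 0)) (hmem : ∀ s, 0 ≤ s → L s ∈ Set.Icc (0:ℝ) 1)
    {s : ℝ} (hs : 0 < s) : lsup L s ∈ Set.Icc (0:ℝ) 1 := by
  constructor
  · exact le_trans (hmem 0 le_rfl).1 (le_lsup hmem ⟨le_refl 0, hs⟩)
  · exact le_trans (lsup_le hmono hs) (hmem s hs.le).2

end lsupSec

def seqTo (s : ℝ) (n : ℕ) : ℝ := s - s / (n + 2)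

section seqToSec

lemma seqTo_mem {s : ℝ} (hs : 0 < s) (n : ℕ) : seqTo s n ∈ Set.Ico 0 s := by
  have h2 : (0:ℝ) < (n:ℝ) + 2 := by positivity
  constructor
  · have hn : (0:ℝ) ≤ (n:ℝ) := by positivity
    have : s / ((n:ℝ) + 2) ≤ s := by
      apply div_le_self hs.le
      linarith
    simpa [seqTo] using this
  · have : 0 < s / ((n:ℝ) + 2) := div_pos hs h2
    simp only [seqTo]
    linarith

lemma seqTo_mono {s : ℝ} (hs : 0 < s) : Monotone (seqTo s) := by
  intro n m h
  have h1 : (0:ℝ) < (n:ℝ) + 2 := by positivity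
  have h3 : ((n:ℝ) + 2) ≤ ((m:ℝ) + 2) := by
    have : (n:ℝ) ≤ m := Nat.cast_le.mpr h
    linarith
  have : s / ((m:ℝ) + 2) ≤ s / ((n:ℝ) + 2) := by
    apply div_le_div_of_nonneg_left hs.le h1 h3
  simp only [seqTo]
  linarith

lemma seqTo_tendsto {s : ℝ} : Tendsto (seqTo s) atTop (𝓝 s) := by
  have h1 : Tendsto (fun n : ℕ => (n:ℝ) + 2) atTop atTop :=
    tendsto_atTop_add_const_right _ 2 tendsto_natCast_atTop_atTop
  have h2 : Tendsto (fun n : ℕ => s / ((n:ℝ) + 2)) atTop (𝓝 0) := by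
    simp only [div_eq_mul_inv]
    simpa using (h1.inv_tendsto_atTop).const_mul s
  have h3 : Tendsto (fun _ : ℕ => s) atTop (𝓝 s) := tendsto_const_nhds
  have := h3.sub h2
  rw [sub_zero] at this
  exact this

end seqToSec


/-- Along the approximating sequence, `L` tends to its left limit. -/
lemma tendsto_L_seqTo (hmono : MonotoneOn L (Set.Ici 0))
    (hmem : ∀ s, 0 ≤ s → L s ∈ Set.Icc (0:ℝ) 1) {s : ℝ} (hs : 0 < s) :
    (⨆ n, L (seqTo s n)) = lsup L s ∧
      Tendsto (fun n => L (seqTo s n)) atTop (𝓝 (lsup L s)) := by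
  have hbddr : BddAbove (range fun n => L (seqTo s n)) := by
    refine ⟨1, ?_⟩
    rintro x ⟨n, rfl⟩
    exact (hmem _ (seqTo_mem hs n).1).2
  have hmonoseq : Monotone fun n => L (seqTo s n) := fun n m h =>
    hmono (seqTo_mem hs n).1 (seqTo_mem hs m).1 (seqTo_mono hs h)
  have hsup : (⨆ n, L (seqTo s n)) = lsup L s := by
    apply le_antisymm
    · exact ciSup_le fun n => le_lsup hmem (seqTo_mem hs n)
    · refine csSup_le (lsup_nonempty hs) ?_
      rintro x ⟨u, hu, rfl⟩
      obtain ⟨n, hn⟩ := (seqTo_tendsto.eventually (eventually_gt_nhds hu.2)).exists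
      exact le_trans (hmono hu.1 (seqTo_mem hs n).1 hn.le) (le_ciSup hbddr n)
  refine ⟨hsup, ?_⟩
  have := tendsto_atTop_ciSup hmonoseq hbddr
  rwa [hsup] at this

/-- Key structural lemma: at every point, the left limit of `α • f ∘ L` is `≤` its value.
This uses the fixed-point property of the solution and右-continuity. -/
lemma no_down_jump (hprob : IsProbabilityMeasure (ℙ : Measure Ω)) (hZcont : ∀ ω, Continuous fun t => Z t ω)
    (hf : ContinuousOn f (Set.Icc 0 1)) (hL : IsMVSolution X0 Z f α L)
    {s : ℝ} (hs : 0 < s) :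
    α * f (lsup L s) ≤ α * f (L s) := by
  haveI := hprob
  obtain ⟨hmono, hL0, hmem, hrc, hfix⟩ := hL
  by_contra hcon
  push_neg at hcon
  obtain ⟨hsup, htend⟩ := tendsto_L_seqTo hmono hmem hs
  -- the hitting set at time `s` is the union of those at times `seqTo s n`
  have hset : hitBy X0 Z f α L s = ⋃ n, hitBy X0 Z f α L (seqTo s n) := by
    apply Set.Subset.antisymm
    · intro ω hω
      rw [mem_hitBy_iff] at hω
      obtain ⟨r, hr, hle⟩ := hω
      rcases lt_or_eq_of_le hr.2 with hrs | hrs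
      · obtain ⟨n, hn⟩ := (seqTo_tendsto.eventually (eventually_gt_nhds hrs)).exists
        exact Set.mem_iUnion.mpr ⟨n, mem_hitBy_iff.mpr ⟨r, ⟨hr.1, hn.le⟩, hle⟩⟩
      · subst hrs
        have hlt : X0 ω < α * f (lsup L r) - Z r ω := by linarith
        -- the values along the sequence tend to `α * f (lsup L r) - Z r ω`
        have hfL : Tendsto (fun n => f (L (seqTo r n))) atTop (𝓝 (f (lsup L r))) := by
          have hmemseq : ∀ᶠ n in atTop, L (seqTo r n) ∈ Set.Icc (0:ℝ) 1 :=
            Eventually.of_forall fun n => hmem _ (seqTo_mem hs n).1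
          exact (hf _ (lsup_mem hmono hmem hs)).tendsto.comp
            (tendsto_nhdsWithin_iff.mpr ⟨htend, hmemseq⟩)
        have hZt : Tendsto (fun n => Z (seqTo r n) ω) atTop (𝓝 (Z r ω)) :=
          ((hZcont ω).tendsto r).comp seqTo_tendsto
        have hT : Tendsto (fun n => α * f (L (seqTo r n)) - Z (seqTo r n) ω) atTop
            (𝓝 (α * f (lsup L r) - Z r ω)) := (hfL.const_mul α).sub hZt
        obtain ⟨n, hn⟩ := (hT.eventually (eventually_gt_nhds hlt)).exists
        refine Set.mem_iUnion.mpr ⟨n, mem_hitBy_iff.mpr ⟨seqTo r n, ?_, hn.le⟩⟩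
        exact ⟨(seqTo_mem hs n).1, le_refl _⟩
    · exact Set.iUnion_subset fun n => hitBy_mono (seqTo_mem hs n).2.le
  have hmonoSets : Monotone fun n => hitBy X0 Z f α L (seqTo s n) := fun n m h =>
    hitBy_mono (seqTo_mono hs h)
  have hmeas : (ℙ : Measure Ω) (hitBy X0 Z f α L s)
      = ⨆ n, (ℙ : Measure Ω) (hitBy X0 Z f α L (seqTo s n)) := by
    rw [hset, hmonoSets.measure_iUnion]
  have hLs : L s = ⨆ n, L (seqTo s n) := by
    rw [hfix s hs.le, hmeas, ENNReal.toReal_iSup (fun n => measure_ne_top _ _)]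
    congr 1
    ext n
    exact (hfix _ (seqTo_mem hs n).1).symm
  rw [hsup] at hLs
  rw [hLs] at hcon
  exact lt_irrefl _ hcon



/-- Upper semicontinuity bound for `u ↦ α f(L u) − Z u ω`. -/
lemma usc_bound (hprob : IsProbabilityMeasure (ℙ : Measure Ω))
    (hZcont : ∀ ω, Continuous fun t => Z t ω)
    (hf : ContinuousOn f (Set.Icc 0 1)) (hL : IsMVSolution X0 Z f α L)
    (ω : Ω) {s : ℝ} (hs0 : 0 ≤ s) {ε : ℝ} (hε : 0 < ε) :
    ∃ δ > 0, ∀ u, 0 ≤ u → |u - s| < δ →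
      α * f (L u) - Z u ω < α * f (L s) - Z s ω + ε := by
  have hmono := hL.1
  have hmem := hL.2.2.1
  have hrc := hL.2.2.2.1
  set c := ε / (3 * (|α| + 1)) with hcdef
  have hc : 0 < c := by positivity
  have hαc : |α| * c ≤ ε / 3 := by
    rw [hcdef, mul_div_assoc']
    rw [div_le_div_iff₀ (by positivity) (by norm_num : (0:ℝ) < 3)]
    nlinarith [abs_nonneg α, hε.le]
  have hstep : ∀ x y : ℝ, |f x - f y| < c → α * f x ≤ α * f y + ε / 3 := by
    intro x y h
    have h2 : α * (f x - f y) ≤ |α| * |f x - f y| := by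
      calc α * (f x - f y) ≤ |α * (f x - f y)| := le_abs_self _
      _ = |α| * |f x - f y| := abs_mul _ _
    have h3 : |α| * |f x - f y| ≤ |α| * c := mul_le_mul_of_nonneg_left h.le (abs_nonneg α)
    nlinarith
  -- continuity of Z at s
  obtain ⟨δZ, hδZ, hZ⟩ := Metric.continuousAt_iff.mp
    ((hZcont ω).continuousAt (x := s)) (ε/3) (by positivity)
  -- right continuity of f ∘ L at s
  have h1 : ContinuousWithinAt L (Set.Ici s) s := hrc s hs0
  have h2 : Tendsto L (𝓝[Set.Ici s] s) (𝓝[Set.Icc 0 1] (L s)) :=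
    tendsto_nhdsWithin_iff.mpr
      ⟨h1, eventually_nhdsWithin_of_forall fun u hu => hmem u (hs0.trans hu)⟩
  have h3 : Tendsto (fun u => f (L u)) (𝓝[Set.Ici s] s) (𝓝 (f (L s))) :=
    (hf _ (hmem s hs0)).tendsto.comp h2
  obtain ⟨δR, hδR, hR⟩ := Metric.tendsto_nhdsWithin_nhds.mp h3 c hc
  -- left estimate
  have hleft : ∃ δL > 0, ∀ u, 0 ≤ u → u < s → s - u < δL →
      α * f (L u) ≤ α * f (L s) + 2 * (ε / 3) := by
    rcases eq_or_lt_of_le hs0 with hsz | hs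
    · exact ⟨1, one_pos, fun u hu0 hus _ =>
        absurd hus (not_lt.mpr (by rw [← hsz]; exact hu0))⟩
    · have hfc : ContinuousWithinAt f (Set.Icc 0 1) (lsup L s) :=
        hf _ (lsup_mem hmono hmem hs)
      obtain ⟨δf, hδf, hfδ⟩ := Metric.continuousWithinAt_iff.mp hfc c hc
      obtain ⟨x, hxmem, hx⟩ :=
        exists_lt_of_lt_csSup (lsup_nonempty hs) (sub_lt_self (lsup L s) hδf)
      obtain ⟨u₀, hu₀, rfl⟩ := hxmem
      refine ⟨s - u₀, by linarith [hu₀.2], fun u hu0 hus hdist => ?_⟩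
      have huu0 : u₀ ≤ u := by linarith
      have hLu : L u₀ ≤ L u := hmono hu₀.1 hu0 huu0
      have hLu2 : L u ≤ lsup L s := le_lsup hmem ⟨hu0, hus⟩
      have hd : dist (L u) (lsup L s) < δf := by
        rw [Real.dist_eq]
        exact abs_lt.mpr ⟨by linarith, by linarith⟩
      have h5 : dist (f (L u)) (f (lsup L s)) < c := hfδ (hmem u hu0) hd
      have hstep1 : α * f (L u) ≤ α * f (lsup L s) + ε / 3 := by
        apply hstep
        rw [← Real.dist_eq]; exact h5
      have hnd : α * f (lsup L s) ≤ α * f (L s) := no_down_jump hprob hZcont hf hL hs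
      linarith
  obtain ⟨δL, hδL, hLprop⟩ := hleft
  refine ⟨min δZ (min δR δL), by positivity, fun u hu0 hd => ?_⟩
  have hdZ : |u - s| < δZ := lt_of_lt_of_le hd (min_le_left _ _)
  have hdR : |u - s| < δR := lt_of_lt_of_le hd ((min_le_right _ _).trans (min_le_left _ _))
  have hdL : |u - s| < δL := lt_of_lt_of_le hd ((min_le_right _ _).trans (min_le_right _ _))
  have hZuv : |Z u ω - Z s ω| < ε / 3 := by
    have := hZ (x := u) (by rw [Real.dist_eq]; exact hdZ)
    rwa [Real.dist_eq] at this
  have hZ1 := (abs_lt.mp hZuv).1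
  have hZ2 := (abs_lt.mp hZuv).2
  rcases le_or_gt s u with hcase | hcase
  · have h5 : dist (f (L u)) (f (L s)) < c :=
      hR hcase (by rw [Real.dist_eq]; exact hdR)
    have h6 : α * f (L u) ≤ α * f (L s) + ε / 3 := by
      apply hstep
      rw [← Real.dist_eq]; exact h5
    linarith
  · have h6 : α * f (L u) ≤ α * f (L s) + 2 * (ε / 3) := by
      apply hLprop u hu0 hcase
      calc s - u ≤ |s - u| := le_abs_self _
      _ = |u - s| := abs_sub_comm _ _
      _ < δL := hdL
    linarith

/-- The supremum is attained, so the hitting event is exactly `{X0 ≤ runSup}`. -/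
lemma hitBy_eq_runSup (hprob : IsProbabilityMeasure (ℙ : Measure Ω))
    (hZcont : ∀ ω, Continuous fun t => Z t ω)
    (hf : ContinuousOn f (Set.Icc 0 1)) (hL : IsMVSolution X0 Z f α L)
    {t : ℝ} (ht : 0 ≤ t) :
    hitBy X0 Z f α L t = {ω | X0 ω ≤ runSup Z f α L t ω} := by
  ext ω
  simp only [Set.mem_setOf_eq]
  rw [mem_hitBy_iff]
  have hbdd := bddAbove_g (α := α) hZcont hf hL.2.2.1 t ω
  have hne : ((fun s => α * f (L s) - Z s ω) '' Set.Icc 0 t).Nonempty :=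
    ⟨_, 0, ⟨le_refl 0, ht⟩, rfl⟩
  constructor
  · rintro ⟨s, hs, hle⟩
    exact hle.trans (le_csSup hbdd ⟨s, hs, rfl⟩)
  · intro hle
    have hchoice : ∀ n : ℕ, ∃ s ∈ Set.Icc (0:ℝ) t,
        runSup Z f α L t ω - 1/((n:ℝ)+1) < α * f (L s) - Z s ω := by
      intro n
      obtain ⟨x, hxmem, hx⟩ := exists_lt_of_lt_csSup hne
        (sub_lt_self _ (by positivity : (0:ℝ) < 1/((n:ℝ)+1)))
      obtain ⟨sn, hsn, rfl⟩ := hxmem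
      exact ⟨sn, hsn, hx⟩
    choose v hv1 hv2 using hchoice
    obtain ⟨a, ha, φ, hφ, hconv⟩ :=
      (isCompact_Icc (a := (0:ℝ)) (b := t)).tendsto_subseq hv1
    suffices hMa : runSup Z f α L t ω ≤ α * f (L a) - Z a ω by
      exact ⟨a, ha, le_trans hle hMa⟩
    by_contra hcon
    push_neg at hcon
    set ε := (runSup Z f α L t ω - (α * f (L a) - Z a ω)) / 2 with hεdef
    have hε : 0 < ε := by rw [hεdef]; linarith
    obtain ⟨δ, hδ, hP⟩ := usc_bound hprob hZcont hf hL ω ha.1 hε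
    have hball : ∀ᶠ n in atTop, dist (v (φ n)) a < δ :=
      (Metric.tendsto_nhds.mp hconv) δ hδ
    have hsmall : ∀ᶠ n : ℕ in atTop, (1:ℝ)/((φ n : ℝ)+1) < ε := by
      have h0 : Tendsto (fun n : ℕ => (1:ℝ)/((n:ℝ)+1)) atTop (𝓝 0) :=
        tendsto_one_div_add_atTop_nhds_zero_nat
      exact (h0.comp hφ.tendsto_atTop).eventually (eventually_lt_nhds hε)
    obtain ⟨n, hn1, hn2⟩ := (hball.and hsmall).exists
    have h3 : α * f (L (v (φ n))) - Z (v (φ n)) ω <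
        α * f (L a) - Z a ω + ε := by
      apply hP (v (φ n)) (hv1 (φ n)).1
      rw [← Real.dist_eq]; exact hn1
    have h4 := hv2 (φ n)
    rw [hεdef] at h3 hn2
    linarith


/-- A countable set of times capturing the supremum of `c - z` for every continuous `z`. -/
lemma exists_dense_seq (c : ℝ → ℝ) {t : ℝ} (ht : 0 ≤ t) :
    ∃ e : ℕ → ℝ, (∀ n, e n ∈ Set.Icc 0 t) ∧
      ∀ s ∈ Set.Icc (0:ℝ) t, ∀ ε > 0, ∃ n, |e n - s| < ε ∧ c s - ε < c (e n) := by
  classical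
  let Q : ℚ × ℚ × ℚ → Prop := fun p =>
    ∃ s ∈ Set.Icc (0:ℝ) t, |s - (p.1 : ℝ)| < (p.2.1 : ℝ) ∧ (p.2.2 : ℝ) < c s
  let pick : ℚ × ℚ × ℚ → ℝ := fun p => if h : Q p then h.choose else 0
  have hpickIcc : ∀ p, pick p ∈ Set.Icc (0:ℝ) t := by
    intro p
    simp only [pick]
    split
    · next h => exact h.choose_spec.1
    · exact ⟨le_refl 0, ht⟩
  refine ⟨fun n => pick ((Denumerable.eqv (ℚ × ℚ × ℚ)).symm n), fun n => hpickIcc _, ?_⟩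
  intro s hs ε hε
  obtain ⟨q, hq1, hq2⟩ := exists_rat_btwn (sub_lt_self (c s) hε)
  obtain ⟨a, ha1, ha2⟩ := exists_rat_btwn (show s < s + ε/4 by linarith)
  obtain ⟨r, hr1, hr2⟩ := exists_rat_btwn (show ε/4 < ε/2 by linarith)
  set p : ℚ × ℚ × ℚ := (a, r, q) with hp
  have hQ : Q p := by
    refine ⟨s, hs, ?_, hq2⟩
    rw [abs_lt]
    constructor <;> simp only [hp] <;> linarith
  refine ⟨Denumerable.eqv (ℚ × ℚ × ℚ) p, ?_⟩
  simp only [Equiv.symm_apply_apply]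
  have hspec := hQ.choose_spec
  have hpickp : pick p = hQ.choose := by simp only [pick, dif_pos hQ]
  rw [hpickp]
  obtain ⟨hsp1, hsp2, hsp3⟩ := hspec
  constructor
  · have h1 : |hQ.choose - (a : ℝ)| < (r : ℝ) := hsp2
    have h2 : |s - (a : ℝ)| < ε/4 := by rw [abs_lt]; constructor <;> linarith
    calc |hQ.choose - s| = |(hQ.choose - (a:ℝ)) + ((a:ℝ) - s)| := by
          rw [sub_add_sub_cancel]
    _ ≤ |hQ.choose - (a:ℝ)| + |(a:ℝ) - s| := abs_add_le _ _
    _ < (r:ℝ) + ε/4 := by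
        have := abs_sub_comm s (a:ℝ)
        apply add_lt_add h1
        rw [abs_sub_comm]; exact h2
    _ < ε := by linarith
  · calc c s - ε < (q : ℝ) := hq1
    _ < c hQ.choose := hsp3

/-- For every continuous `z`, the running sup equals the countable sup along `e`. -/
lemma sSup_eq_iSup_of_dense (c : ℝ → ℝ) {t : ℝ} (ht : 0 ≤ t) {e : ℕ → ℝ}
    (he : ∀ n, e n ∈ Set.Icc 0 t)
    (hdense : ∀ s ∈ Set.Icc (0:ℝ) t, ∀ ε > 0, ∃ n, |e n - s| < ε ∧ c s - ε < c (e n))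
    (z : ℝ → ℝ) (hz : Continuous z)
    (hbdd : BddAbove ((fun s => c s - z s) '' Set.Icc 0 t)) :
    sSup ((fun s => c s - z s) '' Set.Icc 0 t) = ⨆ n, (c (e n) - z (e n)) := by
  have hbr : BddAbove (range fun n => c (e n) - z (e n)) := by
    obtain ⟨B, hB⟩ := hbdd
    refine ⟨B, ?_⟩
    rintro x ⟨n, rfl⟩
    exact hB ⟨e n, he n, rfl⟩
  apply le_antisymm
  · refine csSup_le ⟨_, 0, ⟨le_refl 0, ht⟩, rfl⟩ ?_
    rintro x ⟨s, hs, rfl⟩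
    have hkey : ∀ ε > 0, c s - z s ≤ (⨆ n, (c (e n) - z (e n))) + ε := by
      intro ε hε
      obtain ⟨δ, hδ, hzδ⟩ := Metric.continuousAt_iff.mp (hz.continuousAt (x := s))
        (ε/2) (by positivity)
      obtain ⟨n, hn1, hn2⟩ := hdense s hs (min δ (ε/2)) (by positivity)
      have hz2 : |z (e n) - z s| < ε/2 := by
        have h0 : dist (e n) s < δ := by
          rw [Real.dist_eq]
          exact lt_of_lt_of_le hn1 (min_le_left _ _)
        have := hzδ h0
        rwa [Real.dist_eq] at this
      have hc2 : c s - min δ (ε/2) < c (e n) := hn2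
      have hmin : min δ (ε/2) ≤ ε/2 := min_le_right _ _
      have h3 : c s - z s ≤ (c (e n) - z (e n)) + ε := by
        have := (abs_lt.mp hz2).2
        linarith
      exact h3.trans (add_le_add_left (le_ciSup hbr n) ε)
    by_contra hcc
    push_neg at hcc
    have := hkey ((c s - z s - (⨆ n, (c (e n) - z (e n))))/2) (by linarith)
    linarith
  · exact ciSup_le fun n => le_csSup hbdd ⟨e n, he n, rfl⟩

/-- Measurability of the countable sup, for an arbitrary σ-algebra on `Ω`. -/
lemma measurable_iSup_aux {m : MeasurableSpace Ω} (c : ℝ → ℝ) (e : ℕ → ℝ)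
    (hZm : ∀ n, Measurable[m] fun ω => Z (e n) ω)
    (hbr : ∀ ω, BddAbove (range fun n => c (e n) - Z (e n) ω)) :
    Measurable[m] fun ω => ⨆ n, (c (e n) - Z (e n) ω) := by
  let F : ℕ → Ω → ℝ := fun n => Nat.rec (fun ω => c (e 0) - Z (e 0) ω)
    (fun k Fk ω => max (Fk ω) (c (e (k+1)) - Z (e (k+1)) ω)) n
  have hFmeas : ∀ n, Measurable[m] (F n) := by
    intro n
    induction n with
    | zero => exact (measurable_const.sub (hZm 0))
    | succ k ih => exact ih.max (measurable_const.sub (hZm (k+1)))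
  have hFle : ∀ ω n k, k ≤ n → c (e k) - Z (e k) ω ≤ F n ω := by
    intro ω n
    induction n with
    | zero => intro k hk; interval_cases k; exact le_refl _
    | succ j ih =>
      intro k hk
      rcases Nat.lt_or_ge k (j+1) with h | h
      · exact (ih k (Nat.lt_succ_iff.mp h)).trans (le_max_left _ _)
      · have : k = j + 1 := le_antisymm hk h
        subst this
        exact le_max_right _ _
  have hFub : ∀ ω n, F n ω ≤ ⨆ k, (c (e k) - Z (e k) ω) := by
    intro ω n
    induction n with
    | zero => exact le_ciSup (hbr ω) 0
    | succ j ih => exact max_le ih (le_ciSup (hbr ω) (j+1))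
  have hFmono : ∀ ω, Monotone fun n => F n ω := by
    intro ω n mm h
    induction h with
    | refl => exact le_refl _
    | step h ih => exact ih.trans (le_max_left _ _)
  have hFtend : ∀ ω, Tendsto (fun n => F n ω) atTop (𝓝 (⨆ n, (c (e n) - Z (e n) ω))) := by
    intro ω
    have hb : BddAbove (range fun n => F n ω) := by
      refine ⟨⨆ k, (c (e k) - Z (e k) ω), ?_⟩
      rintro x ⟨n, rfl⟩
      exact hFub ω n
    have := tendsto_atTop_ciSup (hFmono ω) hb
    have heq : (⨆ n, F n ω) = ⨆ n, (c (e n) - Z (e n) ω) := by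
      apply le_antisymm
      · exact ciSup_le fun n => hFub ω n
      · exact ciSup_le fun n => (hFle ω n n (le_refl n)).trans (le_ciSup hb n)
    rwa [heq] at this
  exact measurable_of_tendsto_metrizable hFmeas (tendsto_pi_nhds.mpr hFtend)


/-- The independence computation: probability that `X0` lies in the random interval
`(M2, M1]` equals the integral of `ν₀(Ioc (M2 ω) (M1 ω))`. -/
lemma integral_Ioc_eq (hprob : IsProbabilityMeasure (ℙ : Measure Ω))
    {X0 : Ω → ℝ} (hX0meas : Measurable X0) {W : Ω → ℝ → ℝ}
    (hindep : IndepFun X0 W ℙ) {M1 M2 : Ω → ℝ}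
    (h1c : Measurable[MeasurableSpace.comap W MeasurableSpace.pi] M1)
    (h2c : Measurable[MeasurableSpace.comap W MeasurableSpace.pi] M2)
    (h1m : Measurable M1) (h2m : Measurable M2) :
    ∫ ω, ((Measure.map X0 (ℙ : Measure Ω)) (Set.Ioc (M2 ω) (M1 ω))).toReal ∂(ℙ : Measure Ω)
      = ((ℙ : Measure Ω) {ω | M2 ω < X0 ω ∧ X0 ω ≤ M1 ω}).toReal := by
  haveI := hprob
  haveI hν₀ : IsProbabilityMeasure (Measure.map X0 (ℙ : Measure Ω)) :=
    Measure.isProbabilityMeasure_map hX0meas.aemeasurable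
  set ν₀ : Measure ℝ := Measure.map X0 (ℙ : Measure Ω) with hν₀def
  set P : Ω → ℝ × ℝ := fun ω => (M1 ω, M2 ω) with hPdef
  have hPmeas : Measurable P := h1m.prodMk h2m
  have hPcm : Measurable[MeasurableSpace.comap W MeasurableSpace.pi] P := h1c.prodMk h2c
  -- independence of `X0` and `P`
  have hindepP : IndepFun X0 P ℙ := by
    rw [indepFun_iff_measure_inter_preimage_eq_mul]
    intro s T hs hT
    have h := hPcm hT
    rw [MeasurableSpace.measurableSet_comap] at h
    obtain ⟨T', hT', hTeq⟩ := h
    rw [← hTeq]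
    exact (indepFun_iff_measure_inter_preimage_eq_mul.mp hindep) s T' hs hT'
  -- joint law is a product
  have hprodlaw : Measure.map (fun ω => (P ω, X0 ω)) (ℙ : Measure Ω)
      = (Measure.map P (ℙ : Measure Ω)).prod ν₀ := by
    rw [hν₀def, ← indepFun_iff_map_prod_eq_prod_map_map hPmeas.aemeasurable
      hX0meas.aemeasurable]
    exact hindepP.symm
  -- the kernel `p ↦ ν₀ (Ioc p.2 p.1)` is measurable
  have hIicMeas : Measurable fun a : ℝ => ν₀ (Set.Iic a) := by
    apply Monotone.measurable
    intro a b hab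
    exact measure_mono (Set.Iic_subset_Iic.mpr hab)
  have hIocrw : ∀ p : ℝ × ℝ, ν₀ (Set.Ioc p.2 p.1)
      = ν₀ (Set.Iic p.1) - ν₀ (Set.Iic p.2) := by
    intro p
    rcases le_or_gt p.2 p.1 with h | h
    · rw [← Set.Iic_sdiff_Iic,
        measure_diff (Set.Iic_subset_Iic.mpr h) measurableSet_Iic.nullMeasurableSet
          (measure_ne_top _ _)]
    · rw [Set.Ioc_eq_empty (not_lt.mpr h.le), measure_empty, eq_comm]
      exact tsub_eq_zero_of_le (measure_mono (Set.Iic_subset_Iic.mpr h.le))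
  have hκmeas : Measurable fun p : ℝ × ℝ => ν₀ (Set.Ioc p.2 p.1) := by
    have heq : (fun p : ℝ × ℝ => ν₀ (Set.Ioc p.2 p.1))
        = fun p : ℝ × ℝ => ν₀ (Set.Iic p.1) - ν₀ (Set.Iic p.2) := funext hIocrw
    rw [heq]
    exact (hIicMeas.comp measurable_fst).sub (hIicMeas.comp measurable_snd)
  have hEmeas : MeasurableSet {q : (ℝ × ℝ) × ℝ | q.1.2 < q.2 ∧ q.2 ≤ q.1.1} := by
    apply MeasurableSet.inter
    · exact measurableSet_lt measurable_fst.snd measurable_snd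
    · exact measurableSet_le measurable_snd measurable_fst.fst
  have hkey : (ℙ : Measure Ω) {ω | M2 ω < X0 ω ∧ X0 ω ≤ M1 ω}
      = ∫⁻ ω, ν₀ (Set.Ioc (M2 ω) (M1 ω)) ∂(ℙ : Measure Ω) := by
    have hpre : {ω | M2 ω < X0 ω ∧ X0 ω ≤ M1 ω}
        = (fun ω => (P ω, X0 ω)) ⁻¹' {q : (ℝ × ℝ) × ℝ | q.1.2 < q.2 ∧ q.2 ≤ q.1.1} := rfl
    rw [hpre, ← Measure.map_apply (hPmeas.prodMk hX0meas) hEmeas, hprodlaw,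
      Measure.prod_apply hEmeas]
    have hslice : ∀ p : ℝ × ℝ,
        (Prod.mk p ⁻¹' {q : (ℝ × ℝ) × ℝ | q.1.2 < q.2 ∧ q.2 ≤ q.1.1})
          = Set.Ioc p.2 p.1 := fun p => rfl
    simp_rw [hslice]
    rw [lintegral_map hκmeas hPmeas]
  have haem : AEMeasurable (fun ω => ν₀ (Set.Ioc (M2 ω) (M1 ω))) (ℙ : Measure Ω) :=
    (hκmeas.comp hPmeas).aemeasurable
  rw [hkey, integral_toReal haem (ae_of_all _ fun ω => measure_lt_top _ _)]

end MVAux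

/-- **Comparison argument (Lemma 2.1).** If `L` and `L̄` are two solutions of (MV) with the
same data, then for all `t ≥ 0`,
`|L_t − L̄_t| ≤ max( E[ν₀(I(sup(αf(L)−Z), sup(αf(L̄)−Z)))], E[ν₀(I(sup(αf(L̄)−Z), sup(αf(L)−Z)))] )`,
where `I(a,b) = {y | a < y ≤ b}` and `ν₀` is the law of `X₀`. -/
theorem mv_comparison
    (hprob : IsProbabilityMeasure (ℙ : Measure Ω))
    (X0 : Ω → ℝ) (hX0meas : Measurable X0) (hX0pos : ∀ ω, 0 < X0 ω)
    (Z : ℝ → Ω → ℝ) (hZmeas : ∀ t, Measurable (Z t))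
    (hZcont : ∀ ω, Continuous fun t => Z t ω)
    (hindep : IndepFun X0 (fun ω => fun t => Z t ω) ℙ)
    (f : ℝ → ℝ) (hf : ContinuousOn f (Set.Icc 0 1)) (α : ℝ)
    (L Lbar : ℝ → ℝ)
    (hL : IsMVSolution X0 Z f α L) (hLbar : IsMVSolution X0 Z f α Lbar)
    (t : ℝ) (ht : 0 ≤ t) :
    |L t - Lbar t| ≤
      max
        (∫ ω, ((Measure.map X0 (ℙ : Measure Ω))
            (Set.Ioc (runSup Z f α L t ω) (runSup Z f α Lbar t ω))).toReal ∂(ℙ : Measure Ω))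
        (∫ ω, ((Measure.map X0 (ℙ : Measure Ω))
            (Set.Ioc (runSup Z f α Lbar t ω) (runSup Z f α L t ω))).toReal ∂(ℙ : Measure Ω)) := by
  haveI := hprob
  obtain ⟨e1, he1, hd1⟩ := MVAux.exists_dense_seq (fun s => α * f (L s)) ht
  obtain ⟨e2, he2, hd2⟩ := MVAux.exists_dense_seq (fun s => α * f (Lbar s)) ht
  have hbdd1 := fun ω => MVAux.bddAbove_g (α := α) hZcont hf hL.2.2.1 t ω
  have hbdd2 := fun ω => MVAux.bddAbove_g (α := α) hZcont hf hLbar.2.2.1 t ω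
  have hMeq : runSup Z f α L t = fun ω => ⨆ n, (α * f (L (e1 n)) - Z (e1 n) ω) :=
    funext fun ω => MVAux.sSup_eq_iSup_of_dense _ ht he1 hd1 _ (hZcont ω) (hbdd1 ω)
  have hMbeq : runSup Z f α Lbar t = fun ω => ⨆ n, (α * f (Lbar (e2 n)) - Z (e2 n) ω) :=
    funext fun ω => MVAux.sSup_eq_iSup_of_dense _ ht he2 hd2 _ (hZcont ω) (hbdd2 ω)
  have hbr1 : ∀ ω, BddAbove (range fun n => α * f (L (e1 n)) - Z (e1 n) ω) := by
    intro ω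
    obtain ⟨B, hB⟩ := hbdd1 ω
    exact ⟨B, by rintro x ⟨n, rfl⟩; exact hB ⟨e1 n, he1 n, rfl⟩⟩
  have hbr2 : ∀ ω, BddAbove (range fun n => α * f (Lbar (e2 n)) - Z (e2 n) ω) := by
    intro ω
    obtain ⟨B, hB⟩ := hbdd2 ω
    exact ⟨B, by rintro x ⟨n, rfl⟩; exact hB ⟨e2 n, he2 n, rfl⟩⟩
  have hMmeas : Measurable (runSup Z f α L t) := by
    rw [hMeq]
    exact MVAux.measurable_iSup_aux (fun s => α * f (L s)) e1 (fun n => hZmeas (e1 n)) hbr1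
  have hMbmeas : Measurable (runSup Z f α Lbar t) := by
    rw [hMbeq]
    exact MVAux.measurable_iSup_aux (fun s => α * f (Lbar s)) e2 (fun n => hZmeas (e2 n)) hbr2
  have hWc : Measurable[MeasurableSpace.comap (fun ω => fun t => Z t ω) MeasurableSpace.pi]
      (fun ω => fun t => Z t ω) := measurable_iff_comap_le.mpr le_rfl
  have hZcm : ∀ s : ℝ,
      Measurable[MeasurableSpace.comap (fun ω => fun t => Z t ω) MeasurableSpace.pi]
        (fun ω => Z s ω) := fun s => (measurable_pi_apply s).comp hWc
  have hMcm : Measurable[MeasurableSpace.comap (fun ω => fun t => Z t ω) MeasurableSpace.pi]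
      (runSup Z f α L t) := by
    rw [hMeq]
    exact MVAux.measurable_iSup_aux (fun s => α * f (L s)) e1 (fun n => hZcm (e1 n)) hbr1
  have hMbcm : Measurable[MeasurableSpace.comap (fun ω => fun t => Z t ω) MeasurableSpace.pi]
      (runSup Z f α Lbar t) := by
    rw [hMbeq]
    exact MVAux.measurable_iSup_aux (fun s => α * f (Lbar s)) e2 (fun n => hZcm (e2 n)) hbr2
  have hI1 := MVAux.integral_Ioc_eq hprob hX0meas hindep hMbcm hMcm hMbmeas hMmeas
  have hI2 := MVAux.integral_Ioc_eq hprob hX0meas hindep hMcm hMbcm hMmeas hMbmeas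
  have hAL : hitBy X0 Z f α L t = {ω | X0 ω ≤ runSup Z f α L t ω} :=
    MVAux.hitBy_eq_runSup hprob hZcont hf hL ht
  have hALb : hitBy X0 Z f α Lbar t = {ω | X0 ω ≤ runSup Z f α Lbar t ω} :=
    MVAux.hitBy_eq_runSup hprob hZcont hf hLbar ht
  have hLt : L t = ((ℙ : Measure Ω) {ω | X0 ω ≤ runSup Z f α L t ω}).toReal := by
    rw [← hAL]
    exact hL.2.2.2.2 t ht
  have hLbt : Lbar t = ((ℙ : Measure Ω) {ω | X0 ω ≤ runSup Z f α Lbar t ω}).toReal := by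
    rw [← hALb]
    exact hLbar.2.2.2.2 t ht
  have hstep : ∀ M1 M2 : Ω → ℝ,
      ((ℙ : Measure Ω) {ω | X0 ω ≤ M1 ω}).toReal
        ≤ ((ℙ : Measure Ω) {ω | X0 ω ≤ M2 ω}).toReal
          + ((ℙ : Measure Ω) {ω | M2 ω < X0 ω ∧ X0 ω ≤ M1 ω}).toReal := by
    intro M1 M2
    have hsub : {ω | X0 ω ≤ M1 ω}
        ⊆ {ω | X0 ω ≤ M2 ω} ∪ {ω | M2 ω < X0 ω ∧ X0 ω ≤ M1 ω} := by
      intro ω h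
      by_cases hc : X0 ω ≤ M2 ω
      · exact Or.inl hc
      · exact Or.inr ⟨not_le.mp hc, h⟩
    have h : (ℙ : Measure Ω) {ω | X0 ω ≤ M1 ω}
        ≤ (ℙ : Measure Ω) {ω | X0 ω ≤ M2 ω}
          + (ℙ : Measure Ω) {ω | M2 ω < X0 ω ∧ X0 ω ≤ M1 ω} :=
      le_trans (measure_mono hsub) (measure_union_le _ _)
    have h2 := ENNReal.toReal_mono
      (ENNReal.add_ne_top.mpr ⟨measure_ne_top _ _, measure_ne_top _ _⟩) h
    rwa [ENNReal.toReal_add (measure_ne_top _ _) (measure_ne_top _ _)] at h2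
  rw [abs_sub_le_iff]
  constructor
  · have h := hstep (runSup Z f α L t) (runSup Z f α Lbar t)
    rw [← hLt, ← hLbt, ← hI2] at h
    exact le_trans (by linarith) (le_max_right _ _)
  · have h := hstep (runSup Z f α Lbar t) (runSup Z f α L t)
    rw [← hLt, ← hLbt, ← hI1] at h
    exact le_trans (by linarith) (le_max_left _ _)
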